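/- arXiv:0802.1487 — 5 statements merged into one kernel-verified Lean document; each statement's English description precedes it below -/
import Mathlib

section
/- If a compact set F in the complex plane is connected, has finite one-dimensional Hausdorff measure m₁(F), and is not contained in a single disc of radius 1, then F can be covered by at most 6·m₁(F) closed discs of radius 1 centered at points of F. -/
open Metric MeasureTheory Set
open scoped ENNReal NNReal

lemma ofReal_half : ENNReal.ofReal (1/2 : ℝ) = 1/2 := by
  rw [ENNReal.ofReal_div_of_pos (by norm_num)]
  norm_num

lemma key_half (F : Set ℂ) (hFconn : IsConnected F) {z : ℂ} (hz : z ∈ F)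
    (hnot : ¬ F ⊆ ball z 1) :
    (1/2 : ℝ≥0∞) ≤ μH[1] (F ∩ ball z (1/2)) := by
  obtain ⟨w, hwF, hw⟩ := not_subset.1 hnot
  have hw1 : (1:ℝ) ≤ dist w z := by simpa [mem_ball, not_lt] using hw
  have hlip : LipschitzWith 1 (fun x : ℂ => dist x z) := LipschitzWith.dist_left z
  have hsub : Set.Ico (0:ℝ) (1/2) ⊆ (fun x : ℂ => dist x z) '' (F ∩ ball z (1/2)) := by
    intro t ht
    have hconn : IsPreconnected ((fun x : ℂ => dist x z) '' F) :=
      hFconn.isPreconnected.image _ hlip.continuous.continuousOn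
    have h0 : (0:ℝ) ∈ (fun x : ℂ => dist x z) '' F := ⟨z, hz, by simp⟩
    have h1 : dist w z ∈ (fun x : ℂ => dist x z) '' F := ⟨w, hwF, rfl⟩
    have ht' : t ∈ Set.Icc (0:ℝ) (dist w z) :=
      ⟨ht.1, le_trans (le_of_lt (lt_of_lt_of_le ht.2 (by norm_num))) hw1⟩
    obtain ⟨x, hxF, hxt⟩ := hconn.Icc_subset h0 h1 ht'
    exact ⟨x, ⟨hxF, show dist x z < 1/2 by rw [show dist x z = t from hxt]; exact ht.2⟩, hxt⟩
  have h1 : (1/2 : ℝ≥0∞) ≤ μH[1] ((fun x : ℂ => dist x z) '' (F ∩ ball z (1/2))) := by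
    refine le_trans (le_of_eq ?_) (measure_mono hsub)
    rw [hausdorffMeasure_real, Real.volume_Ico, ← ofReal_half]
    norm_num
  have h2 := hlip.hausdorffMeasure_image_le (zero_le_one) (F ∩ ball z (1/2))
  simpa using le_trans h1 h2

/-- If a compact connected set `F ⊆ ℂ` has finite one-dimensional Hausdorff measure and is
not contained in a single disc of radius 1, then `F` can be covered by at most `6 · m₁(F)`
closed discs of radius 1 centered at points of `F`. -/
theorem stmt0 (F : Set ℂ) (hFc : IsCompact F) (hFconn : IsConnected F)
    (hFm : μH[1] F < ⊤) (hnot : ¬ ∃ z : ℂ, F ⊆ ball z 1) :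
    ∃ S : Finset ℂ, (S : Set ℂ) ⊆ F ∧ (S.card : ℝ) ≤ 6 * (μH[1] F).toReal ∧
      F ⊆ ⋃ z ∈ S, closedBall z 1 := by
  push_neg at hnot
  obtain ⟨z₀, hz₀⟩ := hFconn.nonempty
  set 𝒮 : Set (Set ℂ) := {T | T ⊆ F ∧ T.Pairwise fun x y => 1 ≤ dist x y} with h𝒮
  obtain ⟨M, -, hM⟩ := zorn_subset_nonempty 𝒮 (fun c hc hchain _ => by
    refine ⟨⋃₀ c, ⟨?_, ?_⟩, fun s hs => subset_sUnion_of_mem hs⟩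
    · exact sUnion_subset fun s hs => (hc hs).1
    · intro x hx y hy hxy
      obtain ⟨s, hs, hxs⟩ := hx
      obtain ⟨s', hs', hys'⟩ := hy
      rcases hchain.total hs hs' with h | h
      · exact (hc hs').2 (h hxs) hys' hxy
      · exact (hc hs).2 hxs (h hys') hxy) {z₀} ⟨by simpa using hz₀, pairwise_singleton _ _⟩
  have hMF : M ⊆ F := hM.prop.1
  have hMsep : M.Pairwise fun x y => 1 ≤ dist x y := hM.prop.2
  obtain ⟨t, htF, htfin, htcov⟩ := hFc.finite_cover_balls (by norm_num : (0:ℝ) < 1/2)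
  have hMfin : M.Finite := by
    have hchoice : ∀ x ∈ M, ∃ c ∈ t, x ∈ ball c (1/2) := fun x hx => by
      simpa using htcov (hMF hx)
    choose! c hc1 hc2 using hchoice
    have himg : (c '' M).Finite := htfin.subset (by rintro _ ⟨x, hx, rfl⟩; exact hc1 x hx)
    refine Set.Finite.of_finite_image himg ?_
    intro x hx y hy hxy
    by_contra hne
    have d1 : dist x (c x) < 1/2 := by simpa [mem_ball] using hc2 x hx
    have d2 : dist y (c y) < 1/2 := by simpa [mem_ball] using hc2 y hy
    rw [hxy] at d1
    have hlt : dist x y < 1 :=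
      calc dist x y ≤ dist x (c y) + dist y (c y) := dist_triangle_right _ _ _
        _ < 1 := by linarith
    linarith [hMsep hx hy hne]
  have hcov : F ⊆ ⋃ z ∈ M, closedBall z 1 := by
    intro w hw
    by_contra hwc
    simp only [mem_iUnion, mem_closedBall, not_exists, not_le] at hwc
    have hwM : w ∉ M := fun hwM => absurd (hwc w hwM) (by simp)
    have hins : insert w M ∈ 𝒮 := by
      refine ⟨insert_subset hw hMF, ?_⟩
      rw [Set.pairwise_insert]
      refine ⟨hMsep, fun y hy _ => ?_⟩
      have h := le_of_lt (hwc y hy)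
      exact ⟨h, by rwa [dist_comm]⟩
    have := hM.eq_of_subset hins (subset_insert w M)
    exact hwM (this ▸ mem_insert w M)
  set S : Finset ℂ := hMfin.toFinset with hS
  have hScoe : (S : Set ℂ) = M := hMfin.coe_toFinset
  have hsum : (S.card : ℝ≥0∞) * (1/2) ≤ μH[1] F := by
    have hdisj : (S : Set ℂ).PairwiseDisjoint fun z => F ∩ ball z (1/2) := by
      intro x hx y hy hxy
      have h1 : (1:ℝ) ≤ dist x y := hMsep (hScoe ▸ hx) (hScoe ▸ hy) hxy
      exact (ball_disjoint_ball (by linarith)).mono inter_subset_right inter_subset_right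
    have hmeas : ∀ z ∈ S, MeasurableSet (F ∩ ball z (1/2)) :=
      fun z _ => (hFc.isClosed.measurableSet).inter measurableSet_ball
    calc (S.card : ℝ≥0∞) * (1/2)
        = ∑ _z ∈ S, (1/2 : ℝ≥0∞) := by rw [Finset.sum_const, nsmul_eq_mul]
      _ ≤ ∑ z ∈ S, μH[1] (F ∩ ball z (1/2)) := by
          refine Finset.sum_le_sum fun z hz => ?_
          exact key_half F hFconn (hMF (hScoe ▸ Finset.mem_coe.2 hz)) (hnot z)
      _ = μH[1] (⋃ z ∈ S, F ∩ ball z (1/2)) := (measure_biUnion_finset hdisj hmeas).symm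
      _ ≤ μH[1] F := measure_mono (by
          intro x hx
          simp only [mem_iUnion] at hx
          exact hx.choose_spec.choose_spec.1)
  refine ⟨S, by rw [hScoe]; exact hMF, ?_, ?_⟩
  swap
  · intro x hx
    obtain ⟨z, hzM, hzx⟩ := mem_iUnion₂.1 (hcov hx)
    exact mem_iUnion₂.2 ⟨z, hMfin.mem_toFinset.2 hzM, hzx⟩
  have hfin : (S.card : ℝ≥0∞) * (1/2) ≠ ⊤ := ne_top_of_le_ne_top hFm.ne hsum
  have hto := ENNReal.toReal_mono hFm.ne hsum
  rw [ENNReal.toReal_mul] at hto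
  have h12 : ((1/2 : ℝ≥0∞)).toReal = 1/2 := by norm_num
  have hnatc : ((S.card : ℝ≥0∞)).toReal = (S.card : ℝ) := by simp
  rw [h12, hnatc] at hto
  nlinarith [ENNReal.toReal_nonneg (a := μH[1] F)]
end

section
/- If a compact set F ⊂ ℂ consists of M connected components and m₁(F) < ∞, then F can be covered by at most M(6·m₁(F) + 1) closed discs of radius 1. -/
/-!
A connected set containing `a` and a point at distance `≥ r` from `a` meets the ball
`B(a, r)` in a set of one-dimensional Hausdorff measure at least `r`, since `dist · a`
is 1-Lipschitz and maps that set onto `[0, r)`. In a maximal `1`-separated subset of a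
component `K` with at least two points, the balls of radius `1/2` are disjoint, so the
subset has at most `2 m₁(K) + 1 ≤ 6 m₁(F) + 1` points; by maximality the closed unit
discs around it cover `K`. Summing over the `M` components gives the bound.
-/

open Metric MeasureTheory
open scoped ENNReal NNReal

theorem IsClosed.connectedComponentIn {α : Type*} [TopologicalSpace α] {F : Set α}
    (hF : IsClosed F) (x : α) : IsClosed (connectedComponentIn F x) := by
  by_cases hx : x ∈ F
  · exact isClosed_of_closure_subset <|
      isPreconnected_connectedComponentIn.closure.subset_connectedComponentIn
        (subset_closure (mem_connectedComponentIn hx))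
        (closure_minimal (connectedComponentIn_subset F x) hF)
  · rw [connectedComponentIn_eq_empty hx]
    exact isClosed_empty

namespace IsPreconnected

variable {X : Type*} [MetricSpace X] [MeasurableSpace X] [BorelSpace X] {K : Set X}

theorem ofReal_le_hausdorffMeasure_inter_ball (hK : IsPreconnected K) {x y : X}
    (hx : x ∈ K) (hy : y ∈ K) {r : ℝ} (hr : r ≤ dist y x) :
    ENNReal.ofReal r ≤ μH[1] (K ∩ ball x r) := by
  have hIco : Set.Ico 0 r ⊆ (dist · x) '' (K ∩ ball x r) := by
    intro t ht
    obtain ⟨z, hzK, rfl⟩ := hK.intermediate_value hx hy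
      (continuous_id.dist continuous_const).continuousOn ⟨by simpa using ht.1, ht.2.le.trans hr⟩
    exact ⟨z, ⟨hzK, ht.2⟩, rfl⟩
  calc ENNReal.ofReal r = μH[1] (Set.Ico 0 r) := by
        rw [hausdorffMeasure_real, Real.volume_Ico, sub_zero]
    _ ≤ μH[1] ((dist · x) '' (K ∩ ball x r)) := measure_mono hIco
    _ ≤ μH[1] (K ∩ ball x r) := by
        simpa using (LipschitzWith.dist_left x).hausdorffMeasure_image_le zero_le_one _

theorem card_mul_le_hausdorffMeasure_add (hK : IsPreconnected K) (hKm : MeasurableSet K)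
    {ε : ℝ≥0} {C : Finset X} (hCK : ↑C ⊆ K) (hC : IsSeparated ε (C : Set X)) :
    C.card * (ε / 2 : ℝ≥0) ≤ μH[1] K + (ε / 2 : ℝ≥0) := by
  rcases le_or_gt C.card 1 with hcard | hcard
  · calc (C.card : ℝ≥0∞) * (ε / 2 : ℝ≥0) ≤ 1 * (ε / 2 : ℝ≥0) := by
          gcongr; exact_mod_cast hcard
      _ ≤ μH[1] K + (ε / 2 : ℝ≥0) := by rw [one_mul]; exact le_add_self
  have hsep : ∀ a ∈ C, ∀ b ∈ C, a ≠ b → (ε : ℝ) < dist a b := fun a ha b hb hab => by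
    have : (ε : ℝ≥0∞) < edist a b := hC ha hb hab
    rw [edist_nndist, ENNReal.coe_lt_coe] at this
    rw [dist_nndist]
    exact_mod_cast this
  have hball : ∀ a ∈ C, ((ε / 2 : ℝ≥0) : ℝ≥0∞) ≤ μH[1] (K ∩ ball a (ε / 2)) := by
    intro a ha
    obtain ⟨b, hb, hba⟩ := Finset.exists_mem_ne hcard a
    rw [← ENNReal.ofReal_coe_nnreal, NNReal.coe_div, NNReal.coe_two]
    exact hK.ofReal_le_hausdorffMeasure_inter_ball (hCK ha) (hCK hb)
      (by linarith [hsep b hb a ha hba, ε.2])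
  have hdisj : (C : Set X).PairwiseDisjoint (fun a => K ∩ ball a (ε / 2)) :=
    fun a ha b hb hab => (ball_disjoint_ball (by linarith [hsep a ha b hb hab])).mono
      Set.inter_subset_right Set.inter_subset_right
  calc (C.card : ℝ≥0∞) * (ε / 2 : ℝ≥0) = ∑ _a ∈ C, ((ε / 2 : ℝ≥0) : ℝ≥0∞) := by
        rw [Finset.sum_const, nsmul_eq_mul]
    _ ≤ ∑ a ∈ C, μH[1] (K ∩ ball a (ε / 2)) := Finset.sum_le_sum hball
    _ = μH[1] (⋃ a ∈ C, K ∩ ball a (ε / 2)) :=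
        (measure_biUnion_finset hdisj fun a _ => hKm.inter measurableSet_ball).symm
    _ ≤ μH[1] K := measure_mono (Set.iUnion₂_subset fun _ _ => Set.inter_subset_left)
    _ ≤ μH[1] K + (ε / 2 : ℝ≥0) := le_self_add

theorem exists_finset_card_mul_le_and_subset_iUnion_closedBall (hK : IsPreconnected K)
    (hKc : IsCompact K) {ε : ℝ≥0} (hε : ε ≠ 0) :
    ∃ T : Finset X, T.card * (ε / 2 : ℝ≥0) ≤ μH[1] K + (ε / 2 : ℝ≥0) ∧
      K ⊆ ⋃ z ∈ T, closedBall z ε := by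
  have hpack : packingNumber ε K ≠ ⊤ := by
    obtain ⟨N, -, hN, hNK⟩ :=
      exists_finite_isCover_of_isCompact (half_pos (pos_iff_ne_zero.2 hε)).ne' hKc
    refine ne_top_of_le_ne_top hN.encard_lt_top.ne
      (le_trans ?_ hNK.externalCoveringNumber_le_encard)
    simpa [mul_div_cancel₀ _ (two_ne_zero : (2 : ℝ≥0) ≠ 0)] using
      packingNumber_two_mul_le_externalCoveringNumber (ε / 2) K
  have hfin : (maximalSeparatedSet ε K).Finite :=
    Set.encard_ne_top_iff.mp (encard_maximalSeparatedSet hpack ▸ hpack)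
  refine ⟨hfin.toFinset, ?_, ?_⟩
  · exact hK.card_mul_le_hausdorffMeasure_add hKc.isClosed.measurableSet
      (by simpa using maximalSeparatedSet_subset) (by simpa using isSeparated_maximalSeparatedSet)
  · simpa using (isCover_maximalSeparatedSet hpack).subset_iUnion_closedBall

end IsPreconnected

/-- If a compact set `F ⊆ ℂ` consists of `M` connected components and has finite
one-dimensional Hausdorff measure, then `F` can be covered by at most `M·(6·m₁(F) + 1)`
closed discs of radius 1. -/
theorem stmt1 (F : Set ℂ) (hFc : IsCompact F) (hFm : μH[1] F < ⊤)
    (M : ℕ) (c : Fin M → Set ℂ)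
    (hcover : F = ⋃ i, c i)
    (hcomp : ∀ i, ∃ x ∈ F, c i = connectedComponentIn F x) :
    ∃ S : Finset ℂ, (S.card : ℝ) ≤ M * (6 * (μH[1] F).toReal + 1) ∧
      F ⊆ ⋃ z ∈ S, closedBall z 1 := by
  have hcomponent : ∀ i, ∃ T : Finset ℂ, (T.card : ℝ) ≤ 6 * (μH[1] F).toReal + 1 ∧
      c i ⊆ ⋃ z ∈ T, closedBall z 1 := by
    intro i
    obtain ⟨x, -, hx⟩ := hcomp i
    rw [hx]
    have hsub := connectedComponentIn_subset F x
    obtain ⟨T, hT, hTcov⟩ :=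
      isPreconnected_connectedComponentIn.exists_finset_card_mul_le_and_subset_iUnion_closedBall
        (hFc.of_isClosed_subset (hFc.isClosed.connectedComponentIn x) hsub) one_ne_zero
    refine ⟨T, ?_, by simpa using hTcov⟩
    have hμ : μH[1] (connectedComponentIn F x) ≤ μH[1] F := measure_mono hsub
    have hfin : μH[1] (connectedComponentIn F x) ≠ ⊤ := (hμ.trans_lt hFm).ne
    have h := ENNReal.toReal_mono (by finiteness) hT
    rw [ENNReal.toReal_add hfin (by simp), ENNReal.toReal_mul] at h
    norm_num at h
    linarith [ENNReal.toReal_mono hFm.ne hμ, ENNReal.toReal_nonneg (a := μH[1] F)]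
  choose T hTcard hTcov using hcomponent
  refine ⟨Finset.univ.biUnion T, ?_, ?_⟩
  · calc ((Finset.univ.biUnion T).card : ℝ) ≤ ∑ i, ((T i).card : ℝ) := by
          exact_mod_cast Finset.card_biUnion_le
      _ ≤ ∑ _i : Fin M, (6 * (μH[1] F).toReal + 1) := Finset.sum_le_sum fun i _ => hTcard i
      _ = M * (6 * (μH[1] F).toReal + 1) := by
          rw [Finset.sum_const, Finset.card_univ, Fintype.card_fin, nsmul_eq_mul]
  · rw [hcover]
    exact Set.iUnion_subset fun i => (hTcov i).trans <| Set.biUnion_subset_biUnion_left <|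
      Finset.coe_subset.2 (Finset.subset_biUnion_of_mem T (Finset.mem_univ i))
end

section
/- Let f be a meromorphic function on ℂ such that the family of translates {f(·+h) : h ∈ ℂ} is normal (with respect to the spherical metric, uniformly on compacta) and has no constant limit functions. If f has a zero at each point aₙ and a pole at each point bₖ, then inf over n,k of |aₙ - bₖ| is strictly positive. -/
/-!
If zeros and poles came arbitrarily close, say `a (n j) - b (k j) → 0`, translate `f` by the poles:
a subsequence converges uniformly on the unit disc to some `g`. Fix one of these poles `β`; near `β`
the map `f` is spherically close to `∞`. For large `j`, `g (e j)` with `e j = a (n j) - b (k j)` is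
close both to `f (a (n j)) = 0` and to `f (β + e j) ≈ ∞`, impossible since the chordal distance
from `0` to `∞` is `2`.

Spherical continuity at a pole comes from the analyticity of `1 / f`, except when `1 / f` vanishes
near the pole. Then `f` is `{0, ∞}`-valued everywhere (identity theorem and connectedness), uniformly
close translates must coincide, so `f` has finitely many restrictions to unit discs, and a
pigeonhole argument makes `f` locally constant, hence constant.
-/

open Complex Metric OnePoint Filter

/-- Finite part of a point of the Riemann sphere. -/
noncomputable def finPart (x : OnePoint ℂ) : ℂ := Option.elim x 0 id

/-- Inversion `z ↦ 1/z` on the Riemann sphere. -/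
noncomputable def oinv (x : OnePoint ℂ) : OnePoint ℂ :=
  Option.elim x (((0 : ℂ) : OnePoint ℂ))
    (fun z => if z = 0 then (∞ : OnePoint ℂ) else (((z⁻¹ : ℂ)) : OnePoint ℂ))

/-- The spherical (chordal) metric on the Riemann sphere. -/
noncomputable def sphDist (x y : OnePoint ℂ) : ℝ :=
  Option.elim x
    (Option.elim y 0 (fun w => 2 / Real.sqrt (1 + ‖w‖ ^ 2)))
    (fun z => Option.elim y (2 / Real.sqrt (1 + ‖z‖ ^ 2))
      (fun w => 2 * dist z w / (Real.sqrt (1 + ‖z‖ ^ 2) * Real.sqrt (1 + ‖w‖ ^ 2))))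

/-- A map to the Riemann sphere is meromorphic: at every point either the map is finite
and analytic, or it takes the value `∞` and its reciprocal is analytic there. -/
def MeroSphere (f : ℂ → OnePoint ℂ) : Prop :=
  ∀ z : ℂ, (f z ≠ ∞ ∧ AnalyticAt ℂ (fun w => finPart (f w)) z)
    ∨ (f z = ∞ ∧ AnalyticAt ℂ (fun w => finPart (oinv (f w))) z)

/-- The translates `f (· + h n)` converge to `g` uniformly on compacta in the spherical
metric. -/
def UnifCompLim (f : ℂ → OnePoint ℂ) (h : ℕ → ℂ) (g : ℂ → OnePoint ℂ) : Prop :=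
  ∀ K : Set ℂ, IsCompact K → ∀ ε > (0 : ℝ), ∃ N : ℕ, ∀ n ≥ N, ∀ z ∈ K,
    sphDist (f (z + h n)) (g z) < ε

/-- Yosida's class `N₁`: a meromorphic map to the Riemann sphere whose family of translates
is normal (uniformly on compacta, spherical metric) and has no constant limit function. -/
def YosidaN1 (f : ℂ → OnePoint ℂ) : Prop :=
  MeroSphere f ∧
  (∀ h : ℕ → ℂ, ∃ φ : ℕ → ℕ, StrictMono φ ∧ ∃ g : ℂ → OnePoint ℂ, UnifCompLim f (h ∘ φ) g) ∧
  (∀ h : ℕ → ℂ, ∀ g : ℂ → OnePoint ℂ, UnifCompLim f h g → ¬ ∃ c : OnePoint ℂ, g = fun _ => c)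

open Classical in
/-- Multiplicity of a zero or pole of a meromorphic map to the sphere. -/
noncomputable def multAt (f : ℂ → OnePoint ℂ) (z : ℂ) : ℕ∞ :=
  if f z = (∞ : OnePoint ℂ) then
    (if h : AnalyticAt ℂ (fun w => finPart (oinv (f w))) z then analyticOrderAt (fun w => finPart (oinv (f w))) z else 0)
  else
    (if h : AnalyticAt ℂ (fun w => finPart (f w)) z then analyticOrderAt (fun w => finPart (f w)) z else 0)

open Topology

@[simp] lemma sphDist_coe_coe (z w : ℂ) :
    sphDist z w = 2 * dist z w / (Real.sqrt (1 + ‖z‖ ^ 2) * Real.sqrt (1 + ‖w‖ ^ 2)) := rfl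

@[simp] lemma sphDist_coe_infty (z : ℂ) : sphDist z ∞ = 2 / Real.sqrt (1 + ‖z‖ ^ 2) := rfl

@[simp] lemma sphDist_infty_coe (w : ℂ) : sphDist ∞ w = 2 / Real.sqrt (1 + ‖w‖ ^ 2) := rfl

@[simp] lemma sphDist_infty_infty : sphDist ∞ ∞ = 0 := rfl

@[simp] lemma finPart_coe (z : ℂ) : finPart z = z := rfl

@[simp] lemma finPart_infty : finPart ∞ = 0 := rfl

@[simp] lemma oinv_infty : oinv ∞ = ((0 : ℂ) : OnePoint ℂ) := rfl

@[simp] lemma oinv_coe (z : ℂ) : oinv z = if z = 0 then ∞ else ((z⁻¹ : ℂ) : OnePoint ℂ) := rfl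

lemma sphDist_comm (x y : OnePoint ℂ) : sphDist x y = sphDist y x := by
  induction x using OnePoint.rec <;> induction y using OnePoint.rec <;>
    simp [dist_comm, mul_comm]

lemma sphDist_nonneg (x y : OnePoint ℂ) : 0 ≤ sphDist x y := by
  induction x using OnePoint.rec <;> induction y using OnePoint.rec <;> simp <;> positivity

lemma sphDist_zero_sq_add_sphDist_infty_sq (y : OnePoint ℂ) :
    sphDist ((0 : ℂ) : OnePoint ℂ) y ^ 2 + sphDist y ∞ ^ 2 = 4 := by
  induction y using OnePoint.rec with
  | infty => norm_num
  | coe w =>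
    have hsq : Real.sqrt (1 + ‖w‖ ^ 2) ^ 2 = 1 + ‖w‖ ^ 2 := Real.sq_sqrt (by positivity)
    simp only [sphDist_coe_coe, sphDist_coe_infty, dist_zero_left, norm_zero, ne_eq,
      OfNat.ofNat_ne_zero, not_false_eq_true, zero_pow, add_zero, Real.sqrt_one, one_mul]
    rw [div_pow, div_pow, hsq, mul_pow]
    field_simp
    ring

lemma two_le_sphDist_zero_add_sphDist_infty (y : OnePoint ℂ) :
    2 ≤ sphDist ((0 : ℂ) : OnePoint ℂ) y + sphDist y ∞ := by
  nlinarith [sphDist_zero_sq_add_sphDist_infty_sq y, sphDist_nonneg ((0 : ℂ) : OnePoint ℂ) y,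
    sphDist_nonneg y ∞]

/-- For finite `v, w` this is `√(1 + |w|²) ≤ |v - w| + √(1 + |v|²)`. -/
lemma sphDist_infty_le_add (x y : OnePoint ℂ) : sphDist x ∞ ≤ sphDist x y + sphDist y ∞ := by
  induction x using OnePoint.rec with
  | infty => simpa using add_nonneg (sphDist_nonneg ∞ y) (sphDist_nonneg y ∞)
  | coe v =>
    induction y using OnePoint.rec with
    | infty => simp
    | coe w =>
      set P := Real.sqrt (1 + ‖v‖ ^ 2)
      set Q := Real.sqrt (1 + ‖w‖ ^ 2)
      have hP : 0 < P := Real.sqrt_pos.mpr (by positivity)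
      have hQ : 0 < Q := Real.sqrt_pos.mpr (by positivity)
      have hPv : ‖v‖ ≤ P := Real.le_sqrt_of_sq_le (by linarith)
      have hd : ‖w‖ - ‖v‖ ≤ dist v w := by
        rw [dist_comm, dist_eq_norm]; exact norm_sub_norm_le w v
      have hQle : Q ≤ dist v w + P := by
        refine Real.sqrt_le_iff.mpr ⟨by positivity, ?_⟩
        have hPsq : P ^ 2 = 1 + ‖v‖ ^ 2 := Real.sq_sqrt (by positivity)
        nlinarith [dist_nonneg (x := v) (y := w), norm_nonneg v, norm_nonneg w]
      simp only [sphDist_coe_coe, sphDist_coe_infty]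
      rw [div_add_div _ _ (by positivity) hQ.ne', div_le_div_iff₀ hP (by positivity)]
      nlinarith [mul_le_mul_of_nonneg_left hQle (by positivity : (0 : ℝ) ≤ 2 * P * Q)]

lemma sphDist_infty_le_of_ne_zero {x : OnePoint ℂ} (hx : x ≠ ((0 : ℂ) : OnePoint ℂ)) :
    sphDist x ∞ ≤ 2 * ‖finPart (oinv x)‖ := by
  induction x using OnePoint.rec with
  | infty => simp
  | coe v =>
    have hv : v ≠ 0 := fun h => hx (h ▸ rfl)
    have hvpos : 0 < ‖v‖ := norm_pos_iff.mpr hv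
    have hsqrt : ‖v‖ ≤ Real.sqrt (1 + ‖v‖ ^ 2) := Real.le_sqrt_of_sq_le (by linarith)
    simp only [sphDist_coe_infty, oinv_coe, if_neg hv, finPart_coe, norm_inv]
    rw [← div_eq_mul_inv]
    exact div_le_div_of_nonneg_left (by norm_num) hvpos hsqrt

lemma eq_of_sphDist_lt_one {x y z : OnePoint ℂ}
    (hx : x = ((0 : ℂ) : OnePoint ℂ) ∨ x = ∞) (hy : y = ((0 : ℂ) : OnePoint ℂ) ∨ y = ∞)
    (hxz : sphDist x z < 1) (hyz : sphDist y z < 1) : x = y := by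
  have key := two_le_sphDist_zero_add_sphDist_infty z
  rcases hx with rfl | rfl <;> rcases hy with rfl | rfl
  · rfl
  · linarith [sphDist_comm ∞ z]
  · linarith [sphDist_comm ∞ z]
  · rfl

lemma finPart_eq_zero_iff (x : OnePoint ℂ) :
    finPart x = 0 ↔ x = ((0 : ℂ) : OnePoint ℂ) ∨ x = ∞ := by
  induction x using OnePoint.rec with
  | infty => simp
  | coe v => simp

lemma finPart_oinv_eq_zero_iff (x : OnePoint ℂ) :
    finPart (oinv x) = 0 ↔ x = ((0 : ℂ) : OnePoint ℂ) ∨ x = ∞ := by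
  induction x using OnePoint.rec with
  | infty => simp
  | coe v => by_cases hv : v = 0 <;> simp [hv]

lemma apply_add_nsmul_eq_of_periodicOn {M α : Type*} [AddMonoid M] {f : M → α} {S : Set M}
    {d w : M} (hper : ∀ u ∈ S, f (u + d) = f u) :
    ∀ k : ℕ, (∀ i < k, w + i • d ∈ S) → f (w + k • d) = f w
  | 0, _ => by simp
  | k + 1, hk => by
    rw [succ_nsmul, ← add_assoc, hper _ (hk k k.lt_succ_self)]
    exact apply_add_nsmul_eq_of_periodicOn hper k fun i hi => hk i (hi.trans k.lt_succ_self)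

section LocalPeriod

variable {E α : Type*} [NormedAddCommGroup E] [NormedSpace ℝ E] {f : E → α}

/-- Pigeonhole among the restrictions at `y + j • ρ`, `ρ = r / n!`, gives a local period `m • ρ`
with `m ≤ n`, and `m ∣ n!` makes `r` a multiple of it. -/
lemma apply_add_eq_of_finite_range_restrict
    (hfin : (Set.range fun (y : E) (x : closedBall (0 : E) 1) => f (x + y)).Finite)
    (y r : E) (hr : ‖r‖ ≤ 1 / 2) : f (y + r) = f y := by
  set P := fun (y : E) (x : closedBall (0 : E) 1) => f (x + y)
  set n := hfin.toFinset.card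
  set ρ : E := (n.factorial : ℝ)⁻¹ • r with hρ
  have hsmall : ∀ l ≤ n.factorial, ‖l • ρ‖ ≤ ‖r‖ := by
    intro l hl
    have hfac : (0 : ℝ) < n.factorial := by exact_mod_cast n.factorial_pos
    rw [hρ, ← Nat.cast_smul_eq_nsmul ℝ, smul_smul, norm_smul, Real.norm_eq_abs,
      abs_of_nonneg (by positivity)]
    refine mul_le_of_le_one_left (norm_nonneg r) ?_
    rw [mul_inv_le_iff₀ hfac, one_mul]
    exact_mod_cast hl
  obtain ⟨j, hj, j', hj', hne, heq⟩ := Finset.exists_ne_map_eq_of_card_lt_of_maps_to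
    (s := Finset.range (n + 1)) (t := hfin.toFinset) (f := fun j : ℕ => P (y + j • ρ))
    (by simp [n]) (fun j _ => hfin.mem_toFinset.mpr (Set.mem_range_self _))
  wlog hlt : j < j' generalizing j j'
  · exact this j' hj' j hj hne.symm heq.symm (lt_of_le_of_ne (not_lt.mp hlt) hne.symm)
  obtain ⟨m, rfl⟩ : ∃ m, j' = j + m := ⟨j' - j, by omega⟩
  have hj'n : j + m ≤ n := by simpa [Nat.lt_succ_iff] using hj'
  have hkm : n.factorial / m * m = n.factorial :=
    Nat.div_mul_cancel (Nat.dvd_factorial (by omega) (by omega))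
  have hper : ∀ u ∈ closedBall (y + j • ρ) 1, f (u + m • ρ) = f u := by
    intro u hu
    have h := congrFun heq ⟨u - (y + j • ρ), by simpa [dist_eq_norm] using hu⟩
    simp only [P] at h
    rw [sub_add_cancel] at h
    rw [h, add_nsmul]
    congr 1
    abel
  have hr : (n.factorial / m) • (m • ρ) = r := by
    rw [← mul_nsmul', hkm, hρ, ← Nat.cast_smul_eq_nsmul ℝ, smul_smul,
      mul_inv_cancel₀ (by exact_mod_cast n.factorial_ne_zero), one_smul]
  rw [← hr]
  refine apply_add_nsmul_eq_of_periodicOn hper _ fun i hi => ?_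
  rw [mem_closedBall, dist_eq_norm, add_sub_add_left_eq_sub, ← mul_nsmul']
  calc ‖(i * m) • ρ - j • ρ‖ ≤ ‖(i * m) • ρ‖ + ‖j • ρ‖ := norm_sub_le _ _
    _ ≤ ‖r‖ + ‖r‖ := add_le_add
        (hsmall _ (hkm ▸ Nat.mul_le_mul_right m hi.le))
        (hsmall _ ((by omega : j ≤ n).trans n.self_le_factorial))
    _ ≤ 1 := by linarith

lemma isLocallyConstant_of_finite_range_restrict
    (hfin : (Set.range fun (y : E) (x : closedBall (0 : E) 1) => f (x + y)).Finite) :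
    IsLocallyConstant f := by
  refine (IsLocallyConstant.iff_eventually_eq f).mpr fun y => ?_
  filter_upwards [closedBall_mem_nhds y (by norm_num : (0 : ℝ) < 1 / 2)] with z hz
  simpa using apply_add_eq_of_finite_range_restrict hfin y (z - y) (by rwa [← dist_eq_norm])

end LocalPeriod

lemma MeroSphere.exists_analyticAt_eq_zero_iff {f : ℂ → OnePoint ℂ} (hf : MeroSphere f) (w : ℂ) :
    ∃ F : ℂ → ℂ, AnalyticAt ℂ F w ∧
      ∀ u, F u = 0 ↔ f u = ((0 : ℂ) : OnePoint ℂ) ∨ f u = ∞ := by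
  rcases hf w with ⟨-, hF⟩ | ⟨-, hF⟩
  · exact ⟨_, hF, fun u => finPart_eq_zero_iff (f u)⟩
  · exact ⟨_, hF, fun u => finPart_oinv_eq_zero_iff (f u)⟩

/-- The set where `f` is locally `{0, ∞}`-valued is open, and closed by the identity theorem. -/
lemma MeroSphere.eq_zero_or_infty_of_eventually {f : ℂ → OnePoint ℂ} (hf : MeroSphere f)
    {z₀ : ℂ} (h₀ : ∀ᶠ u in 𝓝 z₀, f u = ((0 : ℂ) : OnePoint ℂ) ∨ f u = ∞) (z : ℂ) :
    f z = ((0 : ℂ) : OnePoint ℂ) ∨ f z = ∞ := by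
  set U := {w | ∀ᶠ u in 𝓝 w, f u = ((0 : ℂ) : OnePoint ℂ) ∨ f u = ∞}
  have hclosed : IsClosed U := by
    refine isOpen_compl_iff.mp (isOpen_iff_mem_nhds.mpr fun w hw => ?_)
    obtain ⟨F, hF, hFzero⟩ := hf.exists_analyticAt_eq_zero_iff w
    rcases hF.eventually_eq_zero_or_eventually_ne_zero with hz | hnz
    · exact absurd (hz.mono fun u hu => (hFzero u).mp hu) hw
    · filter_upwards [eventually_nhdsWithin_iff.mp hnz] with u hu
      by_cases huw : u = w
      · exact huw ▸ hw
      · exact fun hU => hu huw ((hFzero u).mpr hU.self_of_nhds)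
  have hU : U = Set.univ :=
    IsClopen.eq_univ ⟨hclosed, isOpen_setOfPred_eventually_nhds⟩ ⟨z₀, h₀⟩
  exact (hU.symm ▸ Set.mem_univ z : z ∈ U).self_of_nhds

def TranslatesNormal (f : ℂ → OnePoint ℂ) : Prop :=
  ∀ h : ℕ → ℂ, ∃ φ : ℕ → ℕ, StrictMono φ ∧ ∃ g : ℂ → OnePoint ℂ, UnifCompLim f (h ∘ φ) g

namespace TranslatesNormal

variable {f : ℂ → OnePoint ℂ}

/-- Two `{0, ∞}`-valued translates that are uniformly close on `K` agree on `K`; so an infinite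
family of distinct restrictions would have no uniformly convergent subsequence. -/
lemma finite_range_restrict (hf : TranslatesNormal f)
    (htwo : ∀ z, f z = ((0 : ℂ) : OnePoint ℂ) ∨ f z = ∞) {K : Set ℂ} (hK : IsCompact K) :
    (Set.range fun (y : ℂ) (x : K) => f (x + y)).Finite := by
  by_contra hinf
  set e := Set.Infinite.natEmbedding _ hinf
  choose y hy using fun m => (e m).2
  obtain ⟨φ, hφ, g, hlim⟩ := hf y
  obtain ⟨N, hN⟩ := hlim K hK 1 one_pos
  have hpattern : (fun x : K => f (x + y (φ N))) = fun x : K => f (x + y (φ (N + 1))) :=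
    funext fun x => eq_of_sphDist_lt_one (htwo _) (htwo _)
      (hN N le_rfl x x.2) (hN (N + 1) N.le_succ x x.2)
  have he : e (φ N) = e (φ (N + 1)) := Subtype.ext (by rw [← hy, ← hy]; exact hpattern)
  exact (hφ N.lt_succ_self).ne (e.injective he)

lemma apply_eq_of_two_valued (hf : TranslatesNormal f)
    (htwo : ∀ z, f z = ((0 : ℂ) : OnePoint ℂ) ∨ f z = ∞) (z w : ℂ) : f z = f w :=
  (isLocallyConstant_of_finite_range_restrict
    (hf.finite_range_restrict htwo (isCompact_closedBall 0 1))).apply_eq_of_preconnectedSpace z w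

end TranslatesNormal

lemma tendsto_sphDist_infty_of_eq_infty {f : ℂ → OnePoint ℂ} (hmero : MeroSphere f)
    (hnormal : TranslatesNormal f) {β : ℂ} (hβ : f β = ∞) :
    Tendsto (fun w => sphDist (f w) ∞) (𝓝 β) (𝓝 0) := by
  obtain ⟨-, hq⟩ := (hmero β).resolve_left fun h => h.1 hβ
  rcases hq.eventually_eq_zero_or_eventually_ne_zero with hzero | hne
  · have htwo := hmero.eq_zero_or_infty_of_eventually
      (hzero.mono fun u hu => (finPart_oinv_eq_zero_iff _).mp hu)
    simp [hnormal.apply_eq_of_two_valued htwo _ β, hβ]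
  · have hbound : ∀ᶠ w in 𝓝 β, sphDist (f w) ∞ ≤ 2 * ‖finPart (oinv (f w))‖ := by
      filter_upwards [eventually_nhdsWithin_iff.mp hne] with w hw
      refine sphDist_infty_le_of_ne_zero fun h0 => ?_
      by_cases hwβ : w = β
      · rw [hwβ, hβ] at h0; exact OnePoint.infty_ne_coe 0 h0
      · exact hw hwβ ((finPart_oinv_eq_zero_iff _).mpr (Or.inl h0))
    have hsmall : Tendsto (fun w => 2 * ‖finPart (oinv (f w))‖) (𝓝 β) (𝓝 0) := by
      simpa [hβ] using (hq.continuousAt.tendsto.norm.const_mul 2)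
    exact tendsto_of_tendsto_of_tendsto_of_le_of_le' tendsto_const_nhds hsmall
      (Eventually.of_forall fun w => sphDist_nonneg _ _) hbound

lemma exists_tendsto_sub_of_not_separated {E : Type*} [SeminormedAddCommGroup E] {a b : ℕ → E}
    (h : ¬ ∃ δ > (0 : ℝ), ∀ n k, δ ≤ dist (a n) (b k)) :
    ∃ n k : ℕ → ℕ, Tendsto (fun j => a (n j) - b (k j)) atTop (𝓝 0) := by
  push Not at h
  choose n k hnk using fun j : ℕ => h (1 / ((j : ℝ) + 1)) (by positivity)
  refine ⟨n, k, tendsto_zero_iff_norm_tendsto_zero.mpr ?_⟩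
  refine squeeze_zero (fun _ => norm_nonneg _) (fun j => ?_) tendsto_one_div_add_atTop_nhds_zero_nat
  rw [← dist_eq_norm]
  exact (hnk j).le

/-- For a function in Yosida's class N1, the zeros and poles are uniformly separated. -/
theorem stmt6 (f : ℂ → OnePoint ℂ) (hf : YosidaN1 f)
    (a : ℕ → ℂ) (b : ℕ → ℂ)
    (ha : ∀ n, f (a n) = ((0 : ℂ) : OnePoint ℂ)) (hb : ∀ k, f (b k) = (∞ : OnePoint ℂ)) :
    ∃ δ > (0 : ℝ), ∀ n k, δ ≤ dist (a n) (b k) := by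
  obtain ⟨hmero, hnormal, -⟩ := hf
  by_contra hsep
  obtain ⟨n, k, hclose⟩ := exists_tendsto_sub_of_not_separated hsep
  obtain ⟨φ, hφ, g, hlim⟩ := hnormal fun j => b (k j)
  obtain ⟨N, hN⟩ := hlim (closedBall 0 1) (isCompact_closedBall 0 1) (1 / 4) (by norm_num)
  set β := b (k (φ N))
  set e := fun j => a (n (φ j)) - b (k (φ j))
  have he : Tendsto e atTop (𝓝 0) := hclose.comp hφ.tendsto_atTop
  have hpole : ∀ᶠ j in atTop, sphDist (f (e j + β)) ∞ < 1 / 4 := by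
    have := (tendsto_sphDist_infty_of_eq_infty hmero hnormal (hb _)).comp
      (by simpa using he.add_const β : Tendsto (fun j => e j + β) atTop (𝓝 β))
    exact this.eventually (gt_mem_nhds (by norm_num))
  obtain ⟨j, hjN, hjK, hjpole⟩ :=
    ((eventually_ge_atTop N).and ((he.eventually (closedBall_mem_nhds 0 one_pos)).and hpole)).exists
  have hzero : sphDist ((0 : ℂ) : OnePoint ℂ) (g (e j)) < 1 / 4 := by
    simpa [e, ha] using hN j hjN (e j) hjK
  have hnear : sphDist (f (e j + β)) (g (e j)) < 1 / 4 := hN N le_rfl (e j) hjK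
  linarith [two_le_sphDist_zero_add_sphDist_infty (g (e j)),
    sphDist_infty_le_add (g (e j)) (f (e j + β)), sphDist_comm (g (e j)) (f (e j + β))]
end

section
/- Let D = ((aₙ),(bₙ)) be an almost periodic divisor in ℂ. Then there is a constant C₀ such that for every c ∈ ℂ, card{n : |aₙ - c| ≤ 1} + card{n : |bₙ - c| ≤ 1} ≤ C₀. -/
open Complex Metric Set

/-- `τ` is an `ε`-almost period of the divisor `((aₙ),(bₙ))`: there are bijections of the
indices moving each translated zero and pole within `ε` of another one. -/
def IsDivAlmostPeriod (a b : ℕ → ℂ) (ε : ℝ) (τ : ℂ) : Prop :=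
  ∃ σ σ' : ℕ ≃ ℕ, (∀ n, dist (a n + τ) (a (σ n)) < ε) ∧ ∀ n, dist (b n + τ) (b (σ' n)) < ε

/-- `τ` is an `ε`-almost period of the divisor `((aₙ),(bₙ))` with a regular indexing: the
same bijection of indices works for both sequences. -/
def IsDivAlmostPeriodReg (a b : ℕ → ℂ) (ε : ℝ) (τ : ℂ) : Prop :=
  ∃ σ : ℕ ≃ ℕ, (∀ n, dist (a n + τ) (a (σ n)) < ε) ∧ ∀ n, dist (b n + τ) (b (σ n)) < ε

/-- The divisor `((aₙ),(bₙ))` is almost periodic: for each `ε > 0` its `ε`-almost periods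
are relatively dense in `ℂ`. -/
def AlmostPeriodicDivisor (a b : ℕ → ℂ) : Prop :=
  ∀ ε > (0 : ℝ), ∃ L > (0 : ℝ), ∀ c : ℂ, ∃ τ : ℂ, dist τ c ≤ L ∧ IsDivAlmostPeriod a b ε τ

/-- The divisor `((aₙ),(bₙ))` is almost periodic with a regular indexing. -/
def AlmostPeriodicDivisorReg (a b : ℕ → ℂ) : Prop :=
  ∀ ε > (0 : ℝ), ∃ L > (0 : ℝ), ∀ c : ℂ, ∃ τ : ℂ, dist τ c ≤ L ∧ IsDivAlmostPeriodReg a b ε τ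

/-- An almost periodic divisor has a uniformly bounded number of points in every closed
unit disc. -/
theorem stmt17 (a b : ℕ → ℂ)
    (hafin : ∀ r : ℝ, {n | a n ∈ closedBall 0 r}.Finite)
    (hbfin : ∀ r : ℝ, {n | b n ∈ closedBall 0 r}.Finite)
    (hap : AlmostPeriodicDivisor a b) :
    ∃ C₀ : ℕ, ∀ c : ℂ,
      {n | a n ∈ closedBall c 1}.ncard + {n | b n ∈ closedBall c 1}.ncard ≤ C₀ := by
  obtain ⟨L, hL, hAP⟩ := hap 1 one_pos
  refine ⟨{n | a n ∈ closedBall 0 (L + 2)}.ncard + {n | b n ∈ closedBall 0 (L + 2)}.ncard, ?_⟩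
  intro c
  obtain ⟨τ, hτc, σ, σ', hσ, hσ'⟩ := hAP (-c)
  have key : ∀ (s : ℕ → ℂ) (e : ℕ ≃ ℕ), (∀ n, dist (s n + τ) (s (e n)) < 1) →
      {n | s n ∈ closedBall 0 (L + 2)}.Finite →
      {n | s n ∈ closedBall c 1}.ncard ≤ {n | s n ∈ closedBall 0 (L + 2)}.ncard := by
    intro s e he hfin
    have hsub : (e '' {n | s n ∈ closedBall c 1}) ⊆ {n | s n ∈ closedBall 0 (L + 2)} := by
      rintro m ⟨n, hn, rfl⟩
      simp only [mem_setOf_eq, mem_closedBall] at *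
      have h1 : dist (s (e n)) 0 ≤ dist (s (e n)) (s n + τ) + (dist (s n + τ) (c + τ)
          + dist (c + τ) 0) := by
        calc dist (s (e n)) 0 ≤ dist (s (e n)) (s n + τ) + dist (s n + τ) 0 :=
              dist_triangle _ _ _
          _ ≤ dist (s (e n)) (s n + τ) + (dist (s n + τ) (c + τ) + dist (c + τ) 0) := by
              gcongr; exact dist_triangle _ _ _
      have h2 : dist (s n + τ) (c + τ) = dist (s n) c := dist_add_right _ _ _
      have h3 : dist (c + τ) 0 ≤ L := by
        have : dist (c + τ) 0 = dist τ (-c) := by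
          rw [dist_eq_norm, dist_eq_norm]
          ring_nf
        rw [this]; exact hτc
      have h4 : dist (s (e n)) (s n + τ) ≤ 1 := le_of_lt (by rw [dist_comm]; exact he n)
      linarith
    calc {n | s n ∈ closedBall c 1}.ncard
        = (e '' {n | s n ∈ closedBall c 1}).ncard :=
          (Set.ncard_image_of_injective _ e.injective).symm
      _ ≤ {n | s n ∈ closedBall 0 (L + 2)}.ncard := Set.ncard_le_ncard hsub hfin
  have ha := key a σ hσ (hafin (L + 2))
  have hb := key b σ' hσ' (hbfin (L + 2))
  omega
end

section
/- Let D = ((aₙ),(bₙ)) be an almost periodic divisor with a regular indexing (i.e. for every ε > 0, its ε-almost periods τ, relatively dense in ℂ, admit a single bijection σ with |aₙ + τ - a_{σ(n)}| < ε and |bₙ + τ - b_{σ(n)}| < ε for all n). Then sup over n of |aₙ - bₙ| is finite. -/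
open Complex Metric Set

/-- For an almost periodic divisor with a regular indexing, the distances between
corresponding zeros and poles are uniformly bounded. -/
theorem stmt18 (a b : ℕ → ℂ)
    (hafin : ∀ r : ℝ, {n | a n ∈ closedBall 0 r}.Finite)
    (hbfin : ∀ r : ℝ, {n | b n ∈ closedBall 0 r}.Finite)
    (hap : AlmostPeriodicDivisorReg a b) :
    ∃ M : ℝ, ∀ n, dist (a n) (b n) ≤ M := by
  obtain ⟨L, hL, hτ⟩ := hap 1 one_pos
  have hS : {n | a n ∈ closedBall 0 (L + 1)}.Finite := hafin (L + 1)
  obtain ⟨C, hC⟩ := (hS.image (fun m => dist (a m) (b m))).bddAbove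
  refine ⟨C + 2, fun n => ?_⟩
  obtain ⟨τ, hτd, σ, hσa, hσb⟩ := hτ (-(a n))
  have hmem : σ n ∈ {n | a n ∈ closedBall 0 (L + 1)} := by
    simp only [mem_setOf_eq, Metric.mem_closedBall]
    have h1 : dist (a n + τ) 0 ≤ L := by
      rw [dist_eq_norm] at hτd ⊢
      simpa [add_comm, add_sub_cancel_right] using hτd.trans_eq (by ring_nf)
    calc dist (a (σ n)) 0 ≤ dist (a (σ n)) (a n + τ) + dist (a n + τ) 0 := dist_triangle _ _ _
      _ ≤ 1 + L := add_le_add (le_of_lt (by rw [dist_comm]; exact hσa n)) h1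
      _ = L + 1 := add_comm _ _
  have hCm : dist (a (σ n)) (b (σ n)) ≤ C := hC ⟨σ n, hmem, rfl⟩
  calc dist (a n) (b n) = dist (a n + τ) (b n + τ) := by
        rw [dist_eq_norm, dist_eq_norm]; ring_nf
    _ ≤ dist (a n + τ) (a (σ n)) + dist (a (σ n)) (b (σ n)) + dist (b (σ n)) (b n + τ) := by
        exact dist_triangle4 _ _ _ _
    _ ≤ 1 + C + 1 := by
        refine add_le_add (add_le_add (hσa n).le hCm) ?_
        rw [dist_comm]; exact (hσb n).le
    _ = C + 2 := by ring
end
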